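/- arXiv:2406.04088 — 2 statements merged into one kernel-verified Lean document; each statement's English description precedes it below -/
import Mathlib

section
/- Let X be a real Gaussian random variable with law N(μ, σ²), σ > 0, and let Y = max(0, X). Then Var[Y] = (μ² + σ²)·Φ(α) + μσ·φ(α) − (μ·Φ(α) + σ·φ(α))², where α = μ/σ. -/
open MeasureTheory ProbabilityTheory Real Set Filter Topology

noncomputable def stdGaussianPDF (x : ℝ) : ℝ :=
  (Real.sqrt (2 * Real.pi))⁻¹ * Real.exp (-(x ^ 2) / 2)

noncomputable def stdGaussianCDF (x : ℝ) : ℝ :=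
  cdf (gaussianReal 0 1) x

lemma stdGaussianPDF_eq (x : ℝ) : stdGaussianPDF x = gaussianPDFReal 0 1 x := by
  simp [stdGaussianPDF, gaussianPDFReal]

lemma stdGaussianPDF_nonneg (x : ℝ) : 0 ≤ stdGaussianPDF x := by
  rw [stdGaussianPDF_eq]; exact gaussianPDFReal_nonneg 0 1 x

lemma measurable_stdGaussianPDF : Measurable stdGaussianPDF := by
  have : stdGaussianPDF = gaussianPDFReal 0 1 := funext stdGaussianPDF_eq
  rw [this]; exact measurable_gaussianPDFReal 0 1

lemma integrable_pow_mul_stdGaussianPDF (n : ℕ) :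
    Integrable (fun z => z ^ n * stdGaussianPDF z) := by
  have h := (integrable_rpow_mul_exp_neg_mul_sq (by norm_num : (0:ℝ) < 1/2)
    (s := (n : ℝ)) (by exact_mod_cast neg_one_lt_zero.trans_le (Nat.cast_nonneg n))).const_mul ((Real.sqrt (2 * Real.pi))⁻¹)
  apply h.congr (Filter.Eventually.of_forall fun x => ?_)
  simp only [Real.rpow_natCast, stdGaussianPDF]
  ring_nf

lemma integrable_stdGaussianPDF : Integrable stdGaussianPDF := by
  simpa using integrable_pow_mul_stdGaussianPDF 0

lemma hasDerivAt_neg_stdGaussianPDF (z : ℝ) :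
    HasDerivAt (fun t => -stdGaussianPDF t) (z * stdGaussianPDF z) z := by
  have h1 : HasDerivAt (fun t : ℝ => -(t ^ 2) / 2) (-z) z := by
    have := ((hasDerivAt_pow 2 z).neg).div_const 2
    simpa using this.congr_deriv (by ring)
  have h2 := (h1.exp.const_mul ((Real.sqrt (2 * Real.pi))⁻¹)).neg
  simp only [stdGaussianPDF]
  exact h2.congr_deriv (by ring)

lemma hasDerivAt_F (z : ℝ) :
    HasDerivAt (fun t => -t * stdGaussianPDF t) ((z ^ 2 - 1) * stdGaussianPDF z) z := by
  have h1 : HasDerivAt (fun t : ℝ => -t) (-1) z := (hasDerivAt_id z).neg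
  have h2 : HasDerivAt stdGaussianPDF (-(z * stdGaussianPDF z)) z := by
    have := (hasDerivAt_neg_stdGaussianPDF z).neg
    have e : (-fun t => -stdGaussianPDF t) = stdGaussianPDF := by
      funext t
      simp
    rwa [e] at this
  exact (h1.mul h2).congr_deriv (by ring)

lemma tendsto_sq_div_atBot : Tendsto (fun z : ℝ => -(z ^ 2) / 2) atBot atBot := by
  have h1 : Tendsto (fun z : ℝ => z ^ 2) atBot atTop := by
    have := (tendsto_pow_atTop (two_ne_zero)).comp (tendsto_neg_atBot_atTop (G := ℝ))
    refine this.congr fun z => by simp [Function.comp]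
  have h2 : Tendsto (fun x : ℝ => -x / 2) atTop atBot :=
    (tendsto_neg_atTop_atBot).atBot_div_const two_pos
  exact h2.comp h1

lemma tendsto_stdGaussianPDF_atBot : Tendsto stdGaussianPDF atBot (𝓝 0) := by
  have h := (Real.tendsto_exp_atBot.comp tendsto_sq_div_atBot).const_mul
    ((Real.sqrt (2 * Real.pi))⁻¹)
  rw [mul_zero] at h
  exact h.congr fun z => by simp [stdGaussianPDF, Function.comp]

lemma tendsto_id_mul_stdGaussianPDF_atTop :
    Tendsto (fun z => z * stdGaussianPDF z) atTop (𝓝 0) := by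
  have ho := rpow_mul_exp_neg_mul_sq_isLittleO_exp_neg (by norm_num : (0:ℝ) < 1/2) 1
  have harg : Tendsto (fun x : ℝ => -(1/2 : ℝ) * x) atTop atBot :=
    (tendsto_neg_atTop_atBot.atBot_div_const two_pos).congr fun x => by ring
  have h0 : Tendsto (fun x : ℝ => Real.exp (-(1/2 : ℝ) * x)) atTop (𝓝 0) :=
    Real.tendsto_exp_atBot.comp harg
  have h := (ho.trans_tendsto h0).const_mul ((Real.sqrt (2 * Real.pi))⁻¹)
  rw [mul_zero] at h
  apply h.congr'
  filter_upwards [eventually_ge_atTop (0:ℝ)] with x hx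
  rw [Real.rpow_one]
  simp only [stdGaussianPDF]
  ring_nf

lemma stdGaussianPDF_neg (x : ℝ) : stdGaussianPDF (-x) = stdGaussianPDF x := by
  simp [stdGaussianPDF]

lemma tendsto_id_mul_stdGaussianPDF_atBot :
    Tendsto (fun z => z * stdGaussianPDF z) atBot (𝓝 0) := by
  have h := (tendsto_id_mul_stdGaussianPDF_atTop.comp
    (tendsto_neg_atBot_atTop (G := ℝ))).neg
  rw [neg_zero] at h
  apply h.congr
  intro x
  simp [Function.comp, stdGaussianPDF_neg]

lemma integral_Iic_stdGaussianPDF (a : ℝ) :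
    ∫ z in Iic a, stdGaussianPDF z = stdGaussianCDF a := by
  have h1 : stdGaussianCDF a = ((gaussianReal 0 1) (Iic a)).toReal := cdf_eq_real (μ := gaussianReal 0 1) a
  rw [h1, gaussianReal_apply 0 one_ne_zero (Iic a)]
  rw [MeasureTheory.integral_eq_lintegral_of_nonneg_ae
    (Filter.Eventually.of_forall fun x => stdGaussianPDF_nonneg x)
    measurable_stdGaussianPDF.aestronglyMeasurable]
  congr 1
  apply lintegral_congr fun x => ?_
  rw [gaussianPDF, ← stdGaussianPDF_eq]

lemma integral_Iic_id_mul_stdGaussianPDF (a : ℝ) :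
    ∫ z in Iic a, z * stdGaussianPDF z = -stdGaussianPDF a := by
  have hint1 : IntegrableOn (fun z => z * stdGaussianPDF z) (Iic a) := by
    have h := integrable_pow_mul_stdGaussianPDF 1
    simp only [pow_one] at h
    exact h.restrict
  have htd : Tendsto (fun t => -stdGaussianPDF t) atBot (𝓝 0) := by
    have := tendsto_stdGaussianPDF_atBot.neg
    rw [neg_zero] at this
    exact this
  have h := integral_Iic_of_hasDerivAt_of_tendsto (f := fun t => -stdGaussianPDF t)
    (f' := fun z => z * stdGaussianPDF z) (a := a) (m := 0)
    (hasDerivAt_neg_stdGaussianPDF a).continuousAt.continuousWithinAt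
    (fun x _ => hasDerivAt_neg_stdGaussianPDF x) hint1 htd
  simpa using h

lemma integral_Iic_sq_mul_stdGaussianPDF (a : ℝ) :
    ∫ z in Iic a, z ^ 2 * stdGaussianPDF z = stdGaussianCDF a - a * stdGaussianPDF a := by
  have hint2 : IntegrableOn (fun z => z ^ 2 * stdGaussianPDF z) (Iic a) :=
    (integrable_pow_mul_stdGaussianPDF 2).restrict
  have hint0 : IntegrableOn stdGaussianPDF (Iic a) := integrable_stdGaussianPDF.restrict
  have hintm : IntegrableOn (fun z => (z ^ 2 - 1) * stdGaussianPDF z) (Iic a) := by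
    apply Integrable.congr ((hint2.sub hint0))
    exact Filter.Eventually.of_forall fun z => by simp [Pi.sub_apply]; ring
  have hF : Tendsto (fun t => -t * stdGaussianPDF t) atBot (𝓝 0) := by
    have := tendsto_id_mul_stdGaussianPDF_atBot.neg
    rw [neg_zero] at this
    exact this.congr fun z => by ring
  have h := integral_Iic_of_hasDerivAt_of_tendsto (f := fun t => -t * stdGaussianPDF t)
    (f' := fun z => (z ^ 2 - 1) * stdGaussianPDF z) (a := a) (m := 0)
    (hasDerivAt_F a).continuousAt.continuousWithinAt
    (fun x _ => hasDerivAt_F x) hintm hF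
  have hsplit : ∫ z in Iic a, (z ^ 2 - 1) * stdGaussianPDF z
      = (∫ z in Iic a, z ^ 2 * stdGaussianPDF z) - ∫ z in Iic a, stdGaussianPDF z := by
    rw [← integral_sub hint2 hint0]
    exact integral_congr_ae (Filter.Eventually.of_forall fun z => by ring)
  rw [hsplit, integral_Iic_stdGaussianPDF, sub_zero] at h
  linarith [h]

lemma gaussianReal_eq_map (μ σ : ℝ) (hσ : 0 < σ) :
    gaussianReal μ ⟨σ ^ 2, sq_nonneg σ⟩
      = Measure.map (fun z => μ - σ * z) (gaussianReal 0 1) := by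
  have h1 : (gaussianReal 0 1).map (fun z => (-σ) * z)
      = gaussianReal 0 ⟨σ ^ 2, sq_nonneg σ⟩ := by
    rw [gaussianReal_map_const_mul (-σ)]
    congr 1
    · ring
    · ext
      simp [neg_sq]
      rfl
  have h2 : (gaussianReal 0 ⟨σ ^ 2, sq_nonneg σ⟩).map (fun z => μ + z)
      = gaussianReal μ ⟨σ ^ 2, sq_nonneg σ⟩ := by
    have := gaussianReal_map_const_add (μ := 0) (v := ⟨σ ^ 2, sq_nonneg σ⟩) μ
    rw [zero_add] at this
    exact this
  rw [← h2, ← h1, Measure.map_map (measurable_const_add μ) (measurable_const_mul (-σ))]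
  congr 1
  funext z
  simp [Function.comp]
  ring

lemma integral_transfer {Ω : Type*} [MeasureSpace Ω] [IsProbabilityMeasure (ℙ : Measure Ω)]
    (μ σ : ℝ) (hσ : 0 < σ) (X : Ω → ℝ) (hX : Measurable X)
    (hlaw : Measure.map X ℙ = gaussianReal μ ⟨σ ^ 2, sq_nonneg σ⟩)
    (g : ℝ → ℝ) (hg : Measurable g) :
    (Integrable (fun ω => g (X ω)) ℙ ↔
      Integrable (fun z => stdGaussianPDF z * g (μ - σ * z)) volume) ∧
    ∫ ω, g (X ω) ∂ℙ = ∫ z, stdGaussianPDF z * g (μ - σ * z) := by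
  have hT : Measurable (fun z : ℝ => μ - σ * z) :=
    (measurable_const_mul σ).const_sub μ
  have hmap : Measure.map X ℙ = Measure.map (fun z => μ - σ * z) (gaussianReal 0 1) := by
    rw [hlaw, gaussianReal_eq_map μ σ hσ]
  have hγ : gaussianReal 0 1
      = volume.withDensity (fun z => ((Real.toNNReal (stdGaussianPDF z) : NNReal) : ENNReal)) := by
    rw [gaussianReal_of_var_ne_zero 0 one_ne_zero]
    congr 1
    funext z
    simp [gaussianPDF, ← stdGaussianPDF_eq, ENNReal.ofReal]
  have hmeasd : Measurable (fun z => Real.toNNReal (stdGaussianPDF z)) :=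
    measurable_stdGaussianPDF.real_toNNReal
  constructor
  · show Integrable (g ∘ X) ℙ ↔ _
    rw [← integrable_map_measure hg.aestronglyMeasurable hX.aemeasurable, hmap,
      integrable_map_measure hg.aestronglyMeasurable hT.aemeasurable, hγ,
      integrable_withDensity_iff_integrable_smul hmeasd]
    constructor <;> intro h <;> apply h.congr <;>
      refine Filter.Eventually.of_forall fun z => ?_ <;>
      simp [NNReal.smul_def, Real.coe_toNNReal _ (stdGaussianPDF_nonneg z)]
  · rw [← integral_map hX.aemeasurable hg.aestronglyMeasurable, hmap,
      integral_map hT.aemeasurable hg.aestronglyMeasurable, hγ,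
      integral_withDensity_eq_integral_smul hmeasd]
    apply integral_congr_ae
    refine Filter.Eventually.of_forall fun z => ?_
    simp [NNReal.smul_def, Real.coe_toNNReal _ (stdGaussianPDF_nonneg z)]

lemma indicator_relu (μ σ : ℝ) (hσ : 0 < σ) :
    (fun z => stdGaussianPDF z * max 0 (μ - σ * z))
      = Set.indicator (Iic (μ / σ)) (fun z => stdGaussianPDF z * (μ - σ * z)) := by
  funext z
  by_cases h : z ≤ μ / σ
  · rw [Set.indicator_of_mem (show z ∈ Iic (μ/σ) from h), max_eq_right]
    have := (le_div_iff₀ hσ).mp h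
    nlinarith
  · rw [Set.indicator_of_notMem (show z ∉ Iic (μ/σ) from h), max_eq_left, mul_zero]
    push_neg at h
    have := (div_lt_iff₀ hσ).mp h
    nlinarith

lemma indicator_relu_sq (μ σ : ℝ) (hσ : 0 < σ) :
    (fun z => stdGaussianPDF z * (max 0 (μ - σ * z)) ^ 2)
      = Set.indicator (Iic (μ / σ)) (fun z => stdGaussianPDF z * (μ - σ * z) ^ 2) := by
  funext z
  by_cases h : z ≤ μ / σ
  · rw [Set.indicator_of_mem (show z ∈ Iic (μ/σ) from h)]
    congr 2
    rw [max_eq_right]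
    have := (le_div_iff₀ hσ).mp h
    nlinarith
  · rw [Set.indicator_of_notMem (show z ∉ Iic (μ/σ) from h), max_eq_left]
    · ring
    push_neg at h
    have := (div_lt_iff₀ hσ).mp h
    nlinarith

lemma J1 (μ σ : ℝ) : IntegrableOn (fun z => stdGaussianPDF z * (μ - σ * z)) (Iic (μ / σ)) := by
  have i0 : IntegrableOn stdGaussianPDF (Iic (μ / σ)) := integrable_stdGaussianPDF.restrict
  have i1 : IntegrableOn (fun z => z * stdGaussianPDF z) (Iic (μ / σ)) := by
    have h := integrable_pow_mul_stdGaussianPDF 1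
    simp only [pow_one] at h
    exact h.restrict
  apply ((i0.const_mul μ).sub (i1.const_mul σ)).congr
  exact Filter.Eventually.of_forall fun z => by simp; ring

lemma J2 (μ σ : ℝ) : IntegrableOn (fun z => stdGaussianPDF z * (μ - σ * z) ^ 2) (Iic (μ / σ)) := by
  have i0 : IntegrableOn stdGaussianPDF (Iic (μ / σ)) := integrable_stdGaussianPDF.restrict
  have i1 : IntegrableOn (fun z => z * stdGaussianPDF z) (Iic (μ / σ)) := by
    have h := integrable_pow_mul_stdGaussianPDF 1
    simp only [pow_one] at h
    exact h.restrict
  have i2 : IntegrableOn (fun z => z ^ 2 * stdGaussianPDF z) (Iic (μ / σ)) :=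
    (integrable_pow_mul_stdGaussianPDF 2).restrict
  apply (((i0.const_mul (μ ^ 2)).sub (i1.const_mul (2 * μ * σ))).add
    (i2.const_mul (σ ^ 2))).congr
  exact Filter.Eventually.of_forall fun z => by simp; ring

lemma E1 (μ σ : ℝ) (hσ : 0 < σ) : ∫ z, stdGaussianPDF z * max 0 (μ - σ * z)
    = μ * stdGaussianCDF (μ / σ) + σ * stdGaussianPDF (μ / σ) := by
  rw [indicator_relu μ σ hσ, integral_indicator measurableSet_Iic]
  have i0 : IntegrableOn stdGaussianPDF (Iic (μ / σ)) := integrable_stdGaussianPDF.restrict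
  have i1 : IntegrableOn (fun z => z * stdGaussianPDF z) (Iic (μ / σ)) := by
    have h := integrable_pow_mul_stdGaussianPDF 1
    simp only [pow_one] at h
    exact h.restrict
  have hsplit : ∫ z in Iic (μ / σ), stdGaussianPDF z * (μ - σ * z)
      = ∫ z in Iic (μ / σ), (μ * stdGaussianPDF z - σ * (z * stdGaussianPDF z)) :=
    integral_congr_ae (Filter.Eventually.of_forall fun z => by ring)
  rw [hsplit, integral_sub (i0.const_mul μ) (i1.const_mul σ), integral_const_mul,
    integral_const_mul, integral_Iic_stdGaussianPDF, integral_Iic_id_mul_stdGaussianPDF]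
  ring

lemma E2 (μ σ : ℝ) (hσ : 0 < σ) : ∫ z, stdGaussianPDF z * (max 0 (μ - σ * z)) ^ 2
    = (μ ^ 2 + σ ^ 2) * stdGaussianCDF (μ / σ) + μ * σ * stdGaussianPDF (μ / σ) := by
  rw [indicator_relu_sq μ σ hσ, integral_indicator measurableSet_Iic]
  have i0 : IntegrableOn stdGaussianPDF (Iic (μ / σ)) := integrable_stdGaussianPDF.restrict
  have i1 : IntegrableOn (fun z => z * stdGaussianPDF z) (Iic (μ / σ)) := by
    have h := integrable_pow_mul_stdGaussianPDF 1
    simp only [pow_one] at h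
    exact h.restrict
  have i2 : IntegrableOn (fun z => z ^ 2 * stdGaussianPDF z) (Iic (μ / σ)) :=
    (integrable_pow_mul_stdGaussianPDF 2).restrict
  have hsplit : ∫ z in Iic (μ / σ), stdGaussianPDF z * (μ - σ * z) ^ 2
      = ∫ z in Iic (μ / σ), (μ ^ 2 * stdGaussianPDF z
          - (2 * μ * σ) * (z * stdGaussianPDF z) + σ ^ 2 * (z ^ 2 * stdGaussianPDF z)) :=
    integral_congr_ae (Filter.Eventually.of_forall fun z => by ring)
  have isub : IntegrableOn (fun z => μ ^ 2 * stdGaussianPDF z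
      - 2 * μ * σ * (z * stdGaussianPDF z)) (Iic (μ / σ)) :=
    (i0.const_mul (μ ^ 2)).sub (i1.const_mul (2 * μ * σ))
  rw [hsplit, integral_add isub (i2.const_mul (σ ^ 2)),
    integral_sub (i0.const_mul (μ ^ 2)) (i1.const_mul (2 * μ * σ)),
    integral_const_mul, integral_const_mul, integral_const_mul,
    integral_Iic_stdGaussianPDF, integral_Iic_id_mul_stdGaussianPDF,
    integral_Iic_sq_mul_stdGaussianPDF]
  field_simp
  ring

/-- For `X ~ N(μ, σ²)` with `σ > 0` and `Y = max(0, X)`,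
`Var[Y] = (μ² + σ²)·Φ(μ/σ) + μσ·φ(μ/σ) − (μ·Φ(μ/σ) + σ·φ(μ/σ))²`. -/
theorem relu_gaussian_variance {Ω : Type*} [MeasureSpace Ω]
    [IsProbabilityMeasure (ℙ : Measure Ω)]
    (μ σ : ℝ) (hσ : 0 < σ) (X : Ω → ℝ) (hX : Measurable X)
    (hlaw : Measure.map X ℙ = gaussianReal μ ⟨σ ^ 2, sq_nonneg σ⟩) :
    variance (fun ω => max 0 (X ω)) ℙ =
      (μ ^ 2 + σ ^ 2) * stdGaussianCDF (μ / σ) + μ * σ * stdGaussianPDF (μ / σ)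
        - (μ * stdGaussianCDF (μ / σ) + σ * stdGaussianPDF (μ / σ)) ^ 2 := by
  have hg1 : Measurable (fun x : ℝ => max 0 x) := measurable_const.max measurable_id
  have hg2 : Measurable (fun x : ℝ => (max 0 x) ^ 2) := hg1.pow_const 2
  have t1 := integral_transfer μ σ hσ X hX hlaw (fun x => max 0 x) hg1
  have t2 := integral_transfer μ σ hσ X hX hlaw (fun x => (max 0 x) ^ 2) hg2
  have G1 : Integrable (fun z => stdGaussianPDF z * max 0 (μ - σ * z)) volume := by
    rw [indicator_relu μ σ hσ]
    exact (integrable_indicator_iff measurableSet_Iic).2 (J1 μ σ)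
  have G2 : Integrable (fun z => stdGaussianPDF z * (max 0 (μ - σ * z)) ^ 2) volume := by
    rw [indicator_relu_sq μ σ hσ]
    exact (integrable_indicator_iff measurableSet_Iic).2 (J2 μ σ)
  have hY2int : Integrable (fun ω => (max 0 (X ω)) ^ 2) ℙ := t2.1.mpr G2
  have hmem : MemLp (fun ω => max 0 (X ω)) 2 ℙ :=
    (memLp_two_iff_integrable_sq (measurable_const.max hX).aestronglyMeasurable).2 hY2int
  rw [variance_eq_sub hmem]
  have e2 : (∫ ω, ((fun ω => max 0 (X ω)) ^ 2) ω ∂ℙ)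
      = (μ ^ 2 + σ ^ 2) * stdGaussianCDF (μ / σ) + μ * σ * stdGaussianPDF (μ / σ) := by
    simp only [Pi.pow_apply]
    rw [t2.2, E2 μ σ hσ]
  have e1 : (∫ ω, max 0 (X ω) ∂ℙ)
      = μ * stdGaussianCDF (μ / σ) + σ * stdGaussianPDF (μ / σ) := by
    rw [t1.2, E1 μ σ hσ]
  rw [e2, e1]
end

section
/- Let X be a real random variable with law ρ_X and cumulative distribution function F_X, let Y = max(0, X), and let X̃ be any real random variable with law ρ_X̃ and cumulative distribution function F_X̃; assume all laws have finite first moments. Then W₁(ρ_Y, ρ_X̃) ≤ ∫_{−∞}^{0} F_X̃(u) du + W₁(ρ_X, ρ_X̃). -/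
open MeasureTheory ProbabilityTheory Real

/-- The 1-Wasserstein distance between two probability measures on `ℝ` (with finite first
moments), expressed through their cumulative distribution functions:
`W₁(ρ₁, ρ₂) = ∫_ℝ |F₁(u) − F₂(u)| du`. -/
noncomputable def W1cdf (ρ₁ ρ₂ : Measure ℝ) : ℝ :=
  ∫ u, |cdf ρ₁ u - cdf ρ₂ u|

open Set in
lemma lint_cdf_neg (μ : Measure ℝ) [IsProbabilityMeasure μ] :
    ∫⁻ u in Iic (0:ℝ), μ (Iic u) = ∫⁻ x, ENNReal.ofReal (-x) ∂μ := by
  have hs : MeasurableSet {p : ℝ × ℝ | p.2 ≤ p.1} := measurableSet_le measurable_snd measurable_fst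
  have h1 : ((volume.restrict (Iic (0:ℝ))).prod μ) {p : ℝ × ℝ | p.2 ≤ p.1}
      = ∫⁻ u in Iic (0:ℝ), μ (Iic u) := by
    rw [Measure.prod_apply hs]
    simp [Iic]
  have h2 : ((volume.restrict (Iic (0:ℝ))).prod μ) {p : ℝ × ℝ | p.2 ≤ p.1}
      = ∫⁻ x, ENNReal.ofReal (-x) ∂μ := by
    rw [Measure.prod_apply_symm hs]
    congr 1
    ext x
    have : (fun u => (u, x)) ⁻¹' {p : ℝ × ℝ | p.2 ≤ p.1} = Ici x := rfl
    rw [this, Measure.restrict_apply measurableSet_Ici, Ici_inter_Iic, Real.volume_Icc]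
    ring_nf
  rw [← h1, h2]

open Set in
lemma lint_cdf_pos (μ : Measure ℝ) [IsProbabilityMeasure μ] :
    ∫⁻ u in Ici (0:ℝ), μ (Ioi u) = ∫⁻ x, ENNReal.ofReal x ∂μ := by
  have hs : MeasurableSet {p : ℝ × ℝ | p.1 < p.2} := measurableSet_lt measurable_fst measurable_snd
  have h1 : ((volume.restrict (Ici (0:ℝ))).prod μ) {p : ℝ × ℝ | p.1 < p.2}
      = ∫⁻ u in Ici (0:ℝ), μ (Ioi u) := by
    rw [Measure.prod_apply hs]
    simp [Ioi]
  have h2 : ((volume.restrict (Ici (0:ℝ))).prod μ) {p : ℝ × ℝ | p.1 < p.2}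
      = ∫⁻ x, ENNReal.ofReal x ∂μ := by
    rw [Measure.prod_apply_symm hs]
    congr 1
    ext x
    have : (fun u => (u, x)) ⁻¹' {p : ℝ × ℝ | p.1 < p.2} = Iio x := rfl
    rw [this, Measure.restrict_apply measurableSet_Iio, inter_comm, Ici_inter_Iio,
      Real.volume_Ico]
    ring_nf
  rw [← h1, h2]

open Set in
lemma integrableOn_cdf_Iic (μ : Measure ℝ) [IsProbabilityMeasure μ]
    (h : Integrable (fun x : ℝ => x) μ) :
    IntegrableOn (fun u => cdf μ u) (Iic 0) := by
  refine ⟨((monotone_cdf μ).measurable.aestronglyMeasurable), ?_⟩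
  rw [hasFiniteIntegral_iff_ofReal]
  · calc ∫⁻ u in Iic (0:ℝ), ENNReal.ofReal (cdf μ u)
        = ∫⁻ u in Iic (0:ℝ), μ (Iic u) := by
          refine lintegral_congr fun u => ?_
          rw [ofReal_cdf]
      _ = ∫⁻ x, ENNReal.ofReal (-x) ∂μ := lint_cdf_neg μ
      _ ≤ ∫⁻ x, ‖x‖₊ ∂μ := by
          refine lintegral_mono fun x => ?_
          rw [← enorm_eq_nnnorm, ← ofReal_norm]
          exact ENNReal.ofReal_le_ofReal (neg_le_abs x)
      _ < ⊤ := h.hasFiniteIntegral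
  · exact Filter.Eventually.of_forall fun u => cdf_nonneg μ u

open Set in
lemma integrableOn_one_sub_cdf_Ici (μ : Measure ℝ) [IsProbabilityMeasure μ]
    (h : Integrable (fun x : ℝ => x) μ) :
    IntegrableOn (fun u => 1 - cdf μ u) (Ici 0) := by
  refine ⟨(measurable_const.sub (monotone_cdf μ).measurable).aestronglyMeasurable, ?_⟩
  rw [hasFiniteIntegral_iff_ofReal]
  · calc ∫⁻ u in Ici (0:ℝ), ENNReal.ofReal (1 - cdf μ u)
        = ∫⁻ u in Ici (0:ℝ), μ (Ioi u) := by
          refine lintegral_congr fun u => ?_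
          rw [ENNReal.ofReal_sub _ (cdf_nonneg μ u), ofReal_cdf, ENNReal.ofReal_one,
            ← measure_univ (μ := μ), ← Iic_union_Ioi (a := u),
            measure_union (Iic_disjoint_Ioi le_rfl) measurableSet_Ioi,
            ENNReal.add_sub_cancel_left (measure_ne_top μ _)]
      _ = ∫⁻ x, ENNReal.ofReal x ∂μ := lint_cdf_pos μ
      _ ≤ ∫⁻ x, ‖x‖₊ ∂μ := by
          refine lintegral_mono fun x => ?_
          rw [← enorm_eq_nnnorm, ← ofReal_norm]
          exact ENNReal.ofReal_le_ofReal (le_abs_self x)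
      _ < ⊤ := h.hasFiniteIntegral
  · exact Filter.Eventually.of_forall fun u => sub_nonneg.mpr (cdf_le_one μ u)


open Set in
/-- For a real random variable `X` with law `ρ_X`, `Y = max(0, X)` with law the pushforward
`ρ_Y` of `ρ_X` under the ReLU, and any real random variable `X̃` with law `ρ_X̃`
(all with finite first moments),
`W₁(ρ_Y, ρ_X̃) ≤ ∫_{−∞}^{0} F_X̃(u) du + W₁(ρ_X, ρ_X̃)`. -/
theorem relu_W1_bound (ρX ρXt : Measure ℝ)
    [IsProbabilityMeasure ρX] [IsProbabilityMeasure ρXt]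
    (hX : Integrable (fun x : ℝ => x) ρX)
    (hXt : Integrable (fun x : ℝ => x) ρXt) :
    W1cdf (ρX.map (fun x => max 0 x)) ρXt ≤
      (∫ u in Set.Iic (0 : ℝ), cdf ρXt u) + W1cdf ρX ρXt := by
  set ρY := ρX.map (fun x => max 0 x) with hρY
  have hmax : Measurable fun x : ℝ => max 0 x := measurable_const.max measurable_id
  haveI : IsProbabilityMeasure ρY := Measure.isProbabilityMeasure_map hmax.aemeasurable
  set F := fun u => cdf ρX u with hF
  set G := fun u => cdf ρXt u with hG
  set FY := fun u => cdf ρY u with hFY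
  have hY0 : ∀ u < (0:ℝ), FY u = 0 := by
    intro u hu
    have hpre : (fun x : ℝ => max 0 x) ⁻¹' Iic u = ∅ := by
      ext x
      simp only [mem_preimage, mem_Iic, mem_empty_iff_false, iff_false, max_le_iff, not_and]
      intro h0u; linarith
    simp [hFY, cdf_eq_real, measureReal_def, hρY, Measure.map_apply hmax measurableSet_Iic, hpre]
  have hYpos : ∀ u : ℝ, 0 ≤ u → FY u = F u := by
    intro u hu
    have hpre : (fun x : ℝ => max 0 x) ⁻¹' Iic u = Iic u := by
      ext x
      simp [max_le_iff, hu]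
    simp [hFY, hF, cdf_eq_real, measureReal_def, hρY, Measure.map_apply hmax measurableSet_Iic, hpre]
  have hmF : Measurable F := (monotone_cdf ρX).measurable
  have hmG : Measurable G := (monotone_cdf ρXt).measurable
  have hmFY : Measurable FY := (monotone_cdf ρY).measurable
  have hG_Iic : IntegrableOn G (Iic 0) := integrableOn_cdf_Iic ρXt hXt
  have hF_Iic : IntegrableOn F (Iic 0) := integrableOn_cdf_Iic ρX hX
  have h1F : IntegrableOn (fun u => 1 - F u) (Ici 0) := integrableOn_one_sub_cdf_Ici ρX hX
  have h1G : IntegrableOn (fun u => 1 - G u) (Ici 0) := integrableOn_one_sub_cdf_Ici ρXt hXt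
  have habs_meas : Measurable fun u => |F u - G u| := (hmF.sub hmG).abs
  have hFG_Ioi : IntegrableOn (fun u => |F u - G u|) (Ioi 0) := by
    refine Integrable.mono' (IntegrableOn.mono_set (h1F.add h1G) Ioi_subset_Ici_self)
      habs_meas.aestronglyMeasurable (Filter.Eventually.of_forall fun u => ?_)
    rw [Real.norm_eq_abs, abs_abs]
    calc |F u - G u| = |(1 - G u) - (1 - F u)| := by ring_nf
      _ ≤ |1 - G u| + |1 - F u| := abs_sub _ _
      _ = (1 - F u) + (1 - G u) := by
          rw [abs_of_nonneg (sub_nonneg.mpr (cdf_le_one ρXt u)),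
            abs_of_nonneg (sub_nonneg.mpr (cdf_le_one ρX u))]; ring
  have hFG_Iic : IntegrableOn (fun u => |F u - G u|) (Iic 0) := by
    refine Integrable.mono' (hF_Iic.add hG_Iic)
      habs_meas.aestronglyMeasurable (Filter.Eventually.of_forall fun u => ?_)
    rw [Real.norm_eq_abs, abs_abs]
    calc |F u - G u| ≤ |F u| + |G u| := abs_sub _ _
      _ = F u + G u := by rw [abs_of_nonneg (cdf_nonneg ρX u), abs_of_nonneg (cdf_nonneg ρXt u)]
  have hFG : Integrable (fun u => |F u - G u|) := by
    have := hFG_Iic.union hFG_Ioi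
    rwa [Set.Iic_union_Ioi, integrableOn_univ] at this
  have habsY_meas : Measurable fun u => |FY u - G u| := (hmFY.sub hmG).abs
  have hrestr : volume.restrict (Iio (0:ℝ)) = volume.restrict (Iic 0) :=
    Measure.restrict_congr_set Iio_ae_eq_Iic
  have hYG_Iic : IntegrableOn (fun u => |FY u - G u|) (Iic 0) := by
    have hIo : IntegrableOn (fun u => |FY u - G u|) (Iio 0) := by
      refine ((hG_Iic.mono_set Iio_subset_Iic_self).congr_fun (fun u hu => ?_) measurableSet_Iio)
      rw [hY0 u hu, zero_sub, abs_neg, abs_of_nonneg (cdf_nonneg ρXt u)]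
    rwa [IntegrableOn, hrestr] at hIo
  have hYG_Ioi : IntegrableOn (fun u => |FY u - G u|) (Ioi 0) := by
    refine hFG_Ioi.congr_fun (fun u hu => ?_) measurableSet_Ioi
    rw [hYpos u (le_of_lt hu)]
  have hYG : Integrable (fun u => |FY u - G u|) := by
    have := hYG_Iic.union hYG_Ioi
    rwa [Set.Iic_union_Ioi, integrableOn_univ] at this
  have hsplit : W1cdf ρY ρXt
      = (∫ u in Iic (0:ℝ), |FY u - G u|) + ∫ u in Ioi (0:ℝ), |FY u - G u| := by
    rw [W1cdf, ← integral_add_compl measurableSet_Iic hYG, compl_Iic]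
  have e1 : (∫ u in Iic (0:ℝ), |FY u - G u|) = ∫ u in Iic (0:ℝ), G u := by
    rw [← hrestr]
    refine setIntegral_congr_fun measurableSet_Iio fun u hu => ?_
    rw [hY0 u hu, zero_sub, abs_neg, abs_of_nonneg (cdf_nonneg ρXt u)]
  have e2 : (∫ u in Ioi (0:ℝ), |FY u - G u|) = ∫ u in Ioi (0:ℝ), |F u - G u| := by
    refine setIntegral_congr_fun measurableSet_Ioi fun u hu => ?_
    rw [hYpos u (le_of_lt hu)]
  have e3 : (∫ u in Ioi (0:ℝ), |F u - G u|) ≤ W1cdf ρX ρXt :=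
    setIntegral_le_integral hFG (Filter.Eventually.of_forall fun u => abs_nonneg _)
  rw [hsplit, e1, e2]
  exact add_le_add le_rfl e3
end
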